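/- For every integer d ≥ 2, the polynomial G_d(z) = 4(1 − z)²·(−d²(z^{2d} − 2z^d − 5) + (z^d − 1)²) − 6(z^d − 1)²·((−d + 1)z + (d + 1))², which has degree 2d + 2, factors as G_d(z) = (1 − z)^5 · Σ_{i=0}^{2d−3} α_i z^i for some strictly positive integers α_0, …, α_{2d−3}. (For example, G_2(z) = (1−z)^5(18z + 30) and G_3(z) = (1−z)^5(56z³ + 120z² + 168z + 88).) -/
import Mathlib


/-- The polynomial
`G_d(z) = 4(1−z)²(−d²(z^{2d} − 2z^d − 5) + (z^d − 1)²) − 6(z^d − 1)²((−d+1)z + (d+1))²`. -/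
def Gpoly (d : ℕ) (z : ℝ) : ℝ :=
  4 * (1 - z) ^ 2 * (-(d : ℝ) ^ 2 * (z ^ (2 * d) - 2 * z ^ d - 5) + (z ^ d - 1) ^ 2) -
    6 * (z ^ d - 1) ^ 2 * ((-(d : ℝ) + 1) * z + ((d : ℝ) + 1)) ^ 2


/-- Iterated partial sums of the geometric series. -/
noncomputable def scc : ℕ → ℕ → ℝ → ℝ
  | 0, n, z => ∑ i ∈ Finset.range n, z ^ i
  | (k+1), n, z => ∑ j ∈ Finset.range n, scc k j z

lemma scc_zero (n : ℕ) (z : ℝ) : scc 0 n z = ∑ i ∈ Finset.range n, z ^ i := rfl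

lemma scc_succ (k n : ℕ) (z : ℝ) :
    scc (k+1) (n+1) z = scc (k+1) n z + scc k n z := Finset.sum_range_succ _ n

lemma scc_zero_succ (n : ℕ) (z : ℝ) : scc 0 (n+1) z = scc 0 n z + z ^ n :=
  Finset.sum_range_succ _ n

lemma scc_geom (n : ℕ) (z : ℝ) : 1 - z ^ n = (1 - z) * scc 0 n z := by
  have h := geom_sum_mul z n
  rw [scc_zero]
  linear_combination h

lemma scc_rec : ∀ (k n : ℕ) (z : ℝ),
    (n.choose (k+1) : ℝ) - scc k n z = (1 - z) * scc (k+1) n z := by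
  intro k
  induction k with
  | zero =>
    intro n z
    induction n with
    | zero => simp [scc]
    | succ n ihn =>
      rw [scc_zero_succ, scc_succ]
      have hg := scc_geom n z
      simp only [zero_add, Nat.choose_one_right] at ihn ⊢
      push_cast
      linear_combination ihn + hg
  | succ k ih =>
    intro n z
    induction n with
    | zero => simp [scc]
    | succ n ihn =>
      rw [scc_succ, scc_succ, Nat.choose_succ_succ]
      push_cast
      linear_combination ihn + ih n z

lemma scc1_eq (n : ℕ) (z : ℝ) :
    scc 1 n z = ∑ i ∈ Finset.range n, ((n : ℝ) - 1 - i) * z ^ i := by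
  induction n with
  | zero => simp [scc]
  | succ n ihn =>
    rw [scc_succ, ihn, scc_zero, Finset.sum_range_succ, ← Finset.sum_add_distrib]
    push_cast
    rw [Finset.sum_congr rfl (fun i _ => by ring :
      ∀ i ∈ Finset.range n, ((n:ℝ) - 1 - i) * z ^ i + z ^ i = ((n:ℝ) + 1 - 1 - i) * z ^ i)]
    ring

lemma scc2_eq (n : ℕ) (z : ℝ) :
    scc 2 n z = ∑ i ∈ Finset.range n, ((n : ℝ) - 1 - i) * ((n : ℝ) - 2 - i) / 2 * z ^ i := by
  induction n with
  | zero => simp [scc]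
  | succ n ihn =>
    rw [scc_succ, ihn, scc1_eq, Finset.sum_range_succ, ← Finset.sum_add_distrib]
    push_cast
    rw [Finset.sum_congr rfl (fun i _ => by ring :
      ∀ i ∈ Finset.range n, ((n:ℝ) - 1 - i) * ((n:ℝ) - 2 - i) / 2 * z ^ i
        + ((n:ℝ) - 1 - i) * z ^ i
        = ((n:ℝ) + 1 - 1 - i) * ((n:ℝ) + 1 - 2 - i) / 2 * z ^ i)]
    ring

lemma scc3_eq (n : ℕ) (z : ℝ) :
    scc 3 n z = ∑ i ∈ Finset.range n,
      ((n : ℝ) - 1 - i) * ((n : ℝ) - 2 - i) * ((n : ℝ) - 3 - i) / 6 * z ^ i := by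
  induction n with
  | zero => simp [scc]
  | succ n ihn =>
    rw [scc_succ, ihn, scc2_eq, Finset.sum_range_succ, ← Finset.sum_add_distrib]
    push_cast
    rw [Finset.sum_congr rfl (fun i _ => by ring :
      ∀ i ∈ Finset.range n, ((n:ℝ) - 1 - i) * ((n:ℝ) - 2 - i) * ((n:ℝ) - 3 - i) / 6 * z ^ i
        + ((n:ℝ) - 1 - i) * ((n:ℝ) - 2 - i) / 2 * z ^ i
        = ((n:ℝ) + 1 - 1 - i) * ((n:ℝ) + 1 - 2 - i) * ((n:ℝ) + 1 - 3 - i) / 6 * z ^ i)]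
    ring

lemma scc4_eq (n : ℕ) (z : ℝ) :
    scc 4 n z = ∑ i ∈ Finset.range n,
      ((n : ℝ) - 1 - i) * ((n : ℝ) - 2 - i) * ((n : ℝ) - 3 - i) * ((n : ℝ) - 4 - i) / 24
        * z ^ i := by
  induction n with
  | zero => simp [scc]
  | succ n ihn =>
    rw [scc_succ, ihn, scc3_eq, Finset.sum_range_succ, ← Finset.sum_add_distrib]
    push_cast
    rw [Finset.sum_congr rfl (fun i _ => by ring :
      ∀ i ∈ Finset.range n,
        ((n:ℝ) - 1 - i) * ((n:ℝ) - 2 - i) * ((n:ℝ) - 3 - i) * ((n:ℝ) - 4 - i) / 24 * z ^ i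
        + ((n:ℝ) - 1 - i) * ((n:ℝ) - 2 - i) * ((n:ℝ) - 3 - i) / 6 * z ^ i
        = ((n:ℝ) + 1 - 1 - i) * ((n:ℝ) + 1 - 2 - i) * ((n:ℝ) + 1 - 3 - i)
            * ((n:ℝ) + 1 - 4 - i) / 24 * z ^ i)]
    ring

lemma cast_choose_two' (n : ℕ) : (n.choose 2 : ℝ) = n * (n - 1) / 2 := by
  induction n with
  | zero => simp
  | succ n ih =>
    rw [Nat.choose_succ_succ, Nat.choose_one_right]
    push_cast [ih]
    ring
lemma cast_choose_three (n : ℕ) : (n.choose 3 : ℝ) = n * (n - 1) * (n - 2) / 6 := by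
  induction n with
  | zero => simp
  | succ n ih =>
    rw [Nat.choose_succ_succ]
    push_cast [ih, cast_choose_two']
    ring
lemma cast_choose_four (n : ℕ) : (n.choose 4 : ℝ) = n * (n - 1) * (n - 2) * (n - 3) / 24 := by
  induction n with
  | zero => simp
  | succ n ih =>
    rw [Nat.choose_succ_succ]
    push_cast [ih, cast_choose_three]
    ring

/-- Coefficients of the quotient `G_d(z) / (1-z)^5`. -/
def alph (d i : ℕ) : ℕ :=
  if i ≤ d - 2 then
    (((i : ℤ) + 1) * ((i : ℤ) + 2) *
      (7 * (d : ℤ) ^ 2 - 2 * (d : ℤ) * (2 * (i : ℤ) + 3) - ((i : ℤ) ^ 2 + 3 * (i : ℤ) + 1))).toNat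
  else
    ((2 * (d : ℤ) - 2 - (i : ℤ)) * (2 * (d : ℤ) - 1 - (i : ℤ)) *
      (5 * (d : ℤ) ^ 2 - 2 * (d : ℤ) * (2 * (2 * (d : ℤ) - 3 - (i : ℤ)) + 3) +
        ((2 * (d : ℤ) - 3 - (i : ℤ)) ^ 2 + 3 * (2 * (d : ℤ) - 3 - (i : ℤ)) + 1))).toNat

lemma lo_bracket_pos {d i : ℤ} (hd : 2 ≤ d) (hi0 : 0 ≤ i) (hi : i ≤ d - 2) :
    0 < 7 * d ^ 2 - 2 * d * (2 * i + 3) - (i ^ 2 + 3 * i + 1) := by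
  nlinarith [mul_nonneg (sub_nonneg.2 hi) hi0, mul_nonneg (sub_nonneg.2 hi) (by linarith : (0:ℤ) ≤ d)]
lemma hi_bracket_pos {d j : ℤ} (hd : 2 ≤ d) (hj0 : 0 ≤ j) (hj : j ≤ d - 2) :
    0 < 5 * d ^ 2 - 2 * d * (2 * j + 3) + (j ^ 2 + 3 * j + 1) := by
  nlinarith [mul_nonneg (sub_nonneg.2 hj) (by linarith : (0:ℤ) ≤ d), sq_nonneg j]

lemma alph_pos {d : ℕ} (hd : 2 ≤ d) {i : ℕ} (hi : i ≤ 2 * d - 3) : 0 < alph d i := by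
  have hd' : (2 : ℤ) ≤ d := by exact_mod_cast hd
  rw [alph]
  split_ifs with h
  · have h' : (i : ℤ) ≤ (d : ℤ) - 2 := by omega
    have h1 := lo_bracket_pos hd' (by positivity) h'
    have : (0:ℤ) < ((i : ℤ) + 1) * ((i : ℤ) + 2) *
        (7 * (d : ℤ) ^ 2 - 2 * (d : ℤ) * (2 * (i : ℤ) + 3) -
          ((i : ℤ) ^ 2 + 3 * (i : ℤ) + 1)) := by positivity
    omega
  · have hj0 : (0:ℤ) ≤ 2 * (d : ℤ) - 3 - (i : ℤ) := by omega
    have hj : 2 * (d : ℤ) - 3 - (i : ℤ) ≤ (d : ℤ) - 2 := by omega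
    have h1 := hi_bracket_pos hd' hj0 hj
    have : (0:ℤ) < (2 * (d : ℤ) - 2 - (i : ℤ)) * (2 * (d : ℤ) - 1 - (i : ℤ)) *
        (5 * (d : ℤ) ^ 2 - 2 * (d : ℤ) * (2 * (2 * (d : ℤ) - 3 - (i : ℤ)) + 3) +
          ((2 * (d : ℤ) - 3 - (i : ℤ)) ^ 2 + 3 * (2 * (d : ℤ) - 3 - (i : ℤ)) + 1)) := by
      have h2 : (0:ℤ) < 2 * (d : ℤ) - 2 - (i : ℤ) := by omega
      have h3 : (0:ℤ) < 2 * (d : ℤ) - 1 - (i : ℤ) := by omega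
      positivity
    omega

lemma alph_cast_lo {d i : ℕ} (hd : 2 ≤ d) (hi : i ≤ d - 2) :
    ((alph d i : ℕ) : ℝ) = ((i:ℝ) + 1) * ((i:ℝ) + 2) *
      (7 * (d:ℝ) ^ 2 - 2 * (d:ℝ) * (2 * (i:ℝ) + 3) - ((i:ℝ) ^ 2 + 3 * (i:ℝ) + 1)) := by
  have hd' : (2:ℤ) ≤ (d:ℤ) := by exact_mod_cast hd
  have hnn : (0:ℤ) ≤ ((i : ℤ) + 1) * ((i : ℤ) + 2) *
      (7 * (d : ℤ) ^ 2 - 2 * (d : ℤ) * (2 * (i : ℤ) + 3) -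
        ((i : ℤ) ^ 2 + 3 * (i : ℤ) + 1)) := by
    have h1 := lo_bracket_pos (d := (d:ℤ)) (i := (i:ℤ)) hd' (by positivity) (by omega)
    positivity
  have hzz : ((alph d i : ℕ) : ℤ) = ((i : ℤ) + 1) * ((i : ℤ) + 2) *
      (7 * (d : ℤ) ^ 2 - 2 * (d : ℤ) * (2 * (i : ℤ) + 3) -
        ((i : ℤ) ^ 2 + 3 * (i : ℤ) + 1)) := by
    rw [alph, if_pos hi]; exact Int.toNat_of_nonneg hnn
  have h2 : ((alph d i : ℕ) : ℝ) = (((((i : ℤ) + 1) * ((i : ℤ) + 2) *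
      (7 * (d : ℤ) ^ 2 - 2 * (d : ℤ) * (2 * (i : ℤ) + 3) -
        ((i : ℤ) ^ 2 + 3 * (i : ℤ) + 1))) : ℤ) : ℝ) := by exact_mod_cast congrArg (Int.cast : ℤ → ℝ) hzz
  rw [h2]
  push_cast
  ring

lemma alph_cast_hi {d i : ℕ} (hd : 2 ≤ d) (hi1 : ¬ i ≤ d - 2) (hi2 : i ≤ 2 * d - 3) :
    ((alph d i : ℕ) : ℝ) = (2 * (d:ℝ) - 2 - (i:ℝ)) * (2 * (d:ℝ) - 1 - (i:ℝ)) *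
      (5 * (d:ℝ) ^ 2 - 2 * (d:ℝ) * (2 * (2 * (d:ℝ) - 3 - (i:ℝ)) + 3) +
        ((2 * (d:ℝ) - 3 - (i:ℝ)) ^ 2 + 3 * (2 * (d:ℝ) - 3 - (i:ℝ)) + 1)) := by
  have hd' : (2:ℤ) ≤ (d:ℤ) := by exact_mod_cast hd
  have hnn : (0:ℤ) ≤ (2 * (d : ℤ) - 2 - (i : ℤ)) * (2 * (d : ℤ) - 1 - (i : ℤ)) *
      (5 * (d : ℤ) ^ 2 - 2 * (d : ℤ) * (2 * (2 * (d : ℤ) - 3 - (i : ℤ)) + 3) +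
        ((2 * (d : ℤ) - 3 - (i : ℤ)) ^ 2 + 3 * (2 * (d : ℤ) - 3 - (i : ℤ)) + 1)) := by
    have h1 := hi_bracket_pos (d := (d:ℤ)) (j := 2 * (d:ℤ) - 3 - (i:ℤ)) hd' (by omega) (by omega)
    have h2 : (0:ℤ) ≤ 2 * (d : ℤ) - 2 - (i : ℤ) := by omega
    have h3 : (0:ℤ) ≤ 2 * (d : ℤ) - 1 - (i : ℤ) := by omega
    positivity
  have hzz : ((alph d i : ℕ) : ℤ) = (2 * (d : ℤ) - 2 - (i : ℤ)) * (2 * (d : ℤ) - 1 - (i : ℤ)) *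
      (5 * (d : ℤ) ^ 2 - 2 * (d : ℤ) * (2 * (2 * (d : ℤ) - 3 - (i : ℤ)) + 3) +
        ((2 * (d : ℤ) - 3 - (i : ℤ)) ^ 2 + 3 * (2 * (d : ℤ) - 3 - (i : ℤ)) + 1)) := by
    rw [alph, if_neg hi1]; exact Int.toNat_of_nonneg hnn
  have h2 : ((alph d i : ℕ) : ℝ) = ((((2 * (d : ℤ) - 2 - (i : ℤ)) * (2 * (d : ℤ) - 1 - (i : ℤ)) *
      (5 * (d : ℤ) ^ 2 - 2 * (d : ℤ) * (2 * (2 * (d : ℤ) - 3 - (i : ℤ)) + 3) +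
        ((2 * (d : ℤ) - 3 - (i : ℤ)) ^ 2 + 3 * (2 * (d : ℤ) - 3 - (i : ℤ)) + 1))) : ℤ) : ℝ) := by
    exact_mod_cast congrArg (Int.cast : ℤ → ℝ) hzz
  rw [h2]
  push_cast
  ring

/-- **Factorization of `G_d`**: for every `d ≥ 2` there are strictly positive integers
`α_0, …, α_{2d−3}` with `G_d(z) = (1 − z)^5 · Σ_{i=0}^{2d−3} α_i z^i`
(e.g. `G_2(z) = (1−z)^5(18z + 30)` and `G_3(z) = (1−z)^5(56z³ + 120z² + 168z + 88)`). -/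
theorem Gpoly_factorization (d : ℕ) (hd : 2 ≤ d) :
    ∃ α : ℕ → ℕ, (∀ i, i ≤ 2 * d - 3 → 0 < α i) ∧
      ∀ z : ℝ, Gpoly d z = (1 - z) ^ 5 * ∑ i ∈ Finset.range (2 * d - 2), (α i : ℝ) * z ^ i := by
  obtain ⟨e, rfl⟩ : ∃ e, d = e + 2 := ⟨d - 2, by omega⟩
  refine ⟨alph (e + 2), fun i hi => alph_pos hd hi, fun z => ?_⟩
  by_cases hz : z = 1
  · subst hz; simp [Gpoly]
  have hz1 : (1 : ℝ) - z ≠ 0 := fun h => hz (by linarith)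
  -- split the sum
  rw [show 2 * (e + 2) - 2 = (e + 1) + (e + 1) from by omega,
    Finset.sum_range_add (fun i => (alph (e + 2) i : ℝ) * z ^ i) (e + 1) (e + 1)]
  -- evaluate the two halves
  have hlo : ∑ i ∈ Finset.range (e + 1), (alph (e + 2) i : ℝ) * z ^ i
      = ((e:ℝ)+2) * ((e:ℝ)+1) * ((e:ℝ)+3) * (2*(e:ℝ)+5) * scc 0 (e+1) z
        + 2 * ((e:ℝ)+1) * (((e:ℝ)+2)^2 - 10*((e:ℝ)+2) + 1) * scc 1 (e+1) z
        + (-2) * (11*((e:ℝ)+2)^2 - 36*((e:ℝ)+2) + 13) * scc 2 (e+1) z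
        + 48 * ((e:ℝ)+1) * scc 3 (e+1) z
        + (-24) * scc 4 (e+1) z := by
    rw [scc_zero, scc1_eq, scc2_eq, scc3_eq, scc4_eq, Finset.mul_sum, Finset.mul_sum,
      Finset.mul_sum, Finset.mul_sum, Finset.mul_sum, ← Finset.sum_add_distrib,
      ← Finset.sum_add_distrib, ← Finset.sum_add_distrib, ← Finset.sum_add_distrib]
    refine Finset.sum_congr rfl fun i hi => ?_
    have hie : i ≤ e := by simpa using Finset.mem_range_succ_iff.mp hi
    rw [alph_cast_lo (by omega) (by omega : i ≤ (e + 2) - 2)]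
    push_cast
    ring
  have hhi : ∑ i ∈ Finset.range (e + 1), (alph (e + 2) ((e + 1) + i) : ℝ) * z ^ ((e + 1) + i)
      = z^(e+1) * ( (10*((e:ℝ)+2)^2 - 12*((e:ℝ)+2) + 2) * scc 0 (e+1) z
        + (20*((e:ℝ)+2)^2 - 48*((e:ℝ)+2) + 28) * scc 1 (e+1) z
        + (10*((e:ℝ)+2)^2 - 60*((e:ℝ)+2) + 74) * scc 2 (e+1) z
        + (-24) * (((e:ℝ)+2) - 3) * scc 3 (e+1) z
        + 24 * scc 4 (e+1) z ) := by
    rw [scc_zero, scc1_eq, scc2_eq, scc3_eq, scc4_eq, Finset.mul_sum, Finset.mul_sum,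
      Finset.mul_sum, Finset.mul_sum, Finset.mul_sum, ← Finset.sum_add_distrib,
      ← Finset.sum_add_distrib, ← Finset.sum_add_distrib, ← Finset.sum_add_distrib,
      Finset.mul_sum]
    refine Finset.sum_congr rfl fun j hj => ?_
    have hje : j ≤ e := by simpa using Finset.mem_range_succ_iff.mp hj
    rw [alph_cast_hi (d := e + 2) (i := (e+1)+j) (by omega) (by omega) (by omega)]
    push_cast
    ring
  rw [hlo, hhi]
  -- solve the chain top-down
  have e4 : scc 4 (e+1) z = (((e+1).choose 4 : ℝ) - scc 3 (e+1) z) / (1 - z) := by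
    rw [eq_div_iff hz1]; linear_combination -(scc_rec 3 (e+1) z)
  have e3 : scc 3 (e+1) z = (((e+1).choose 3 : ℝ) - scc 2 (e+1) z) / (1 - z) := by
    rw [eq_div_iff hz1]; linear_combination -(scc_rec 2 (e+1) z)
  have e2 : scc 2 (e+1) z = (((e+1).choose 2 : ℝ) - scc 1 (e+1) z) / (1 - z) := by
    rw [eq_div_iff hz1]; linear_combination -(scc_rec 1 (e+1) z)
  have e1 : scc 1 (e+1) z = (((e+1).choose 1 : ℝ) - scc 0 (e+1) z) / (1 - z) := by
    rw [eq_div_iff hz1]; linear_combination -(scc_rec 0 (e+1) z)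
  have e0 : scc 0 (e+1) z = (1 - z^(e+1)) / (1 - z) := by
    rw [eq_div_iff hz1]; linear_combination -(scc_geom (e+1) z)
  rw [e4, e3, e2, e1, e0, cast_choose_four, cast_choose_three, cast_choose_two',
    Nat.choose_one_right]
  -- rewrite Gpoly in terms of w = z^(e+1)
  rw [Gpoly, show 2 * (e + 2) = (e + 2) * 2 from by ring, pow_mul,
    show z ^ (e + 2) = z ^ (e + 1) * z from by rw [← pow_succ]]
  push_cast
  field_simp
  ring
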